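/- For p = 5, the energy of the soliton Q = Q_1 vanishes: ∫_ℝ ( Q^{6}/30 − (Q')²/2 ) dx = 0, where Q(z) = (15 · sech²(2z))^{1/4}. -/

import Mathlib

noncomputable def sech (z : ℝ) : ℝ := 2 / (Real.exp z + Real.exp (-z))

/-! Writing `Q z = 15^{1/4} · cosh(2z)^{-1/2}`, the energy density becomes
`√15/2 · e(2z)` with `e = (1 - sinh²)/cosh³`, and `e` is the derivative of `sinh/cosh²`,
which vanishes at `±∞`. Integrability of `e` comes from `|e| ≤ 1/cosh ≤ 2/(1 + y²)`. -/

open MeasureTheory Filter Real Topology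

namespace Real

lemma one_add_sq_div_two_le_cosh (y : ℝ) : 1 + y ^ 2 / 2 ≤ cosh y := by
  have hsinh : |y / 2| ≤ |sinh (y / 2)| := by
    rw [abs_sinh]
    exact self_le_sinh_iff.mpr (abs_nonneg _)
  have hcosh : cosh y = cosh (y / 2) ^ 2 + sinh (y / 2) ^ 2 := by
    rw [← cosh_two_mul, mul_div_cancel₀ y two_ne_zero]
  nlinarith [sq_le_sq.mpr hsinh, cosh_sq' (y / 2)]

lemma abs_le_cosh (y : ℝ) : |y| ≤ cosh y := by
  nlinarith [one_add_sq_div_two_le_cosh y, sq_abs y, sq_nonneg (|y| - 1)]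

lemma tendsto_cosh_atTop : Tendsto cosh atTop atTop :=
  tendsto_atTop_mono abs_le_cosh tendsto_abs_atTop_atTop

lemma tendsto_cosh_atBot : Tendsto cosh atBot atTop :=
  tendsto_atTop_mono abs_le_cosh tendsto_abs_atBot_atTop

lemma integrable_inv_cosh : Integrable fun y ↦ (cosh y)⁻¹ := by
  refine (integrable_inv_one_add_sq.const_mul 2).mono'
    measurable_cosh.inv.aestronglyMeasurable (ae_of_all _ fun y ↦ ?_)
  have h := one_add_sq_div_two_le_cosh y
  rw [norm_inv, norm_of_nonneg (cosh_pos y).le, ← div_eq_mul_inv, inv_le_comm₀ (cosh_pos y)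
    (by positivity), inv_div]
  linarith

lemma abs_sinh_div_cosh_sq_le (y : ℝ) : |sinh y / cosh y ^ 2| ≤ (cosh y)⁻¹ := by
  have hc := cosh_pos y
  rw [abs_div, abs_of_pos (pow_pos hc 2), div_le_iff₀ (pow_pos hc 2), pow_two,
    inv_mul_cancel_left₀ hc.ne']
  exact (abs_sinh y ▸ sinh_lt_cosh |y|).le.trans (cosh_abs y).le

lemma abs_one_sub_sinh_sq_div_cosh_pow_three_le (y : ℝ) :
    |(1 - sinh y ^ 2) / cosh y ^ 3| ≤ (cosh y)⁻¹ := by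
  have hc := cosh_pos y
  rw [abs_div, abs_of_pos (pow_pos hc 3), div_le_iff₀ (pow_pos hc 3),
    show cosh y ^ 3 = cosh y * cosh y ^ 2 by ring, inv_mul_cancel_left₀ hc.ne', cosh_sq']
  exact (abs_sub _ _).trans (by rw [abs_one, abs_of_nonneg (sq_nonneg _)])

lemma hasDerivAt_sinh_div_cosh_sq (y : ℝ) :
    HasDerivAt (fun y ↦ sinh y / cosh y ^ 2) ((1 - sinh y ^ 2) / cosh y ^ 3) y := by
  refine ((hasDerivAt_sinh y).div ((hasDerivAt_cosh y).fun_pow 2) (by positivity)).congr_deriv ?_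
  field_simp
  linear_combination cosh y * cosh_sq' y

lemma tendsto_sinh_div_cosh_sq {l : Filter ℝ} (hl : Tendsto cosh l atTop) :
    Tendsto (fun y ↦ sinh y / cosh y ^ 2) l (𝓝 0) :=
  squeeze_zero_norm abs_sinh_div_cosh_sq_le hl.inv_tendsto_atTop

lemma integral_one_sub_sinh_sq_div_cosh_pow_three :
    ∫ y, (1 - sinh y ^ 2) / cosh y ^ 3 = 0 := by
  have hint : Integrable fun y ↦ (1 - sinh y ^ 2) / cosh y ^ 3 :=
    integrable_inv_cosh.mono' (by fun_prop : Measurable _).aestronglyMeasurable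
      (ae_of_all _ abs_one_sub_sinh_sq_div_cosh_pow_three_le)
  simpa using integral_of_hasDerivAt_of_tendsto hasDerivAt_sinh_div_cosh_sq hint
    (tendsto_sinh_div_cosh_sq tendsto_cosh_atBot) (tendsto_sinh_div_cosh_sq tendsto_cosh_atTop)

lemma hasDerivAt_cosh_mul_rpow (k r x : ℝ) :
    HasDerivAt (fun z ↦ cosh (k * z) ^ r) (k * r * cosh (k * x) ^ r * tanh (k * x)) x := by
  have hc := cosh_pos (k * x)
  refine (((hasDerivAt_cosh _).comp x ((hasDerivAt_id x).const_mul k)).rpow_const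
    (Or.inl hc.ne')).congr_deriv ?_
  simp only [id, mul_one, Function.comp_apply]
  rw [rpow_sub_one hc.ne', tanh_eq_sinh_div_cosh]
  ring

end Real

lemma sech_eq_inv_cosh (y : ℝ) : sech y = (cosh y)⁻¹ := by
  rw [sech, cosh_eq, inv_div]

lemma rpow_mul_sech_sq {c : ℝ} (hc : 0 ≤ c) (r y : ℝ) :
    (c * sech y ^ 2) ^ r = c ^ r * cosh y ^ (-2 * r) := by
  have hy := (cosh_pos y).le
  rw [sech_eq_inv_cosh, inv_pow, ← rpow_natCast, ← rpow_neg hy, mul_rpow hc (rpow_nonneg hy _),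
    ← rpow_mul hy]
  norm_num

lemma soliton_energy_density {Q : ℝ → ℝ}
    (hQ : Q = fun z ↦ 15 ^ ((1 : ℝ) / 4) * cosh (2 * z) ^ (-(1 / 2 : ℝ))) (x : ℝ) :
    Q x ^ 6 / 30 - deriv Q x ^ 2 / 2 = √15 / 2 * ((1 - sinh (2 * x) ^ 2) / cosh (2 * x) ^ 3) := by
  have hderiv := (hasDerivAt_cosh_mul_rpow 2 (-(1 / 2)) x).const_mul (15 ^ ((1 : ℝ) / 4))
  rw [← hQ] at hderiv
  rw [hderiv.deriv, hQ]
  set a : ℝ := 15 ^ ((1 : ℝ) / 4)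
  set c := cosh (2 * x)
  have hc : 0 < c := cosh_pos _
  have ha : a ^ 2 = √15 := by
    rw [← rpow_mul_natCast (by norm_num), sqrt_eq_rpow]; norm_num
  have ha4 : a ^ 4 = 15 := by
    rw [← rpow_mul_natCast (by norm_num)]; norm_num
  have hu : (c ^ (-(1 / 2 : ℝ))) ^ 2 = c⁻¹ := by
    rw [← rpow_mul_natCast hc.le]; norm_num [rpow_neg_one]
  have ha6 : a ^ 6 = 15 * √15 := by rw [show 6 = 4 + 2 by rfl, pow_add, ha4, ha]
  have hu6 : (c ^ (-(1 / 2 : ℝ))) ^ 6 = (c ^ 3)⁻¹ := by rw [← inv_pow, ← hu]; ring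
  rw [mul_pow, mul_pow, mul_pow, mul_pow, ha, ha6, hu, hu6, tanh_eq_sinh_div_cosh]
  field_simp
  ring

theorem critical_soliton_zero_energy
    (Q : ℝ → ℝ) (hQ : ∀ z, Q z = (15 * sech (2 * z) ^ 2) ^ ((1 : ℝ) / 4)) :
    ∫ x : ℝ, ((Q x) ^ 6 / 30 - (deriv Q x) ^ 2 / 2) = 0 := by
  have hQ' : Q = fun z ↦ 15 ^ ((1 : ℝ) / 4) * cosh (2 * z) ^ (-(1 / 2 : ℝ)) := by
    ext z
    rw [hQ, rpow_mul_sech_sq (by norm_num)]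
    norm_num
  simp_rw [soliton_energy_density hQ', integral_const_mul]
  rw [Measure.integral_comp_mul_left (fun y ↦ (1 - sinh y ^ 2) / cosh y ^ 3),
    integral_one_sub_sinh_sq_div_cosh_pow_three, smul_zero, mul_zero]
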